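/- arXiv:1604.06762 — 4 statements merged into one kernel-verified Lean document; each statement's English description precedes it below -/
import Mathlib

section
/- Perturbation of discrete dichotomy Green's functions: Let (T_n)_{n∈ℤ} and (T̃_n)_{n∈ℤ} be sequences of bounded operators on a Banach space Y whose associated evolution operators T_{n,m} = T_{n−1}⋯T_m (n ≥ m) both admit exponential dichotomies with Green's functions G_{n,m} and G̃_{n,m} satisfying ‖G_{n,m}‖ ≤ M e^{−β d|n−m|} and ‖G̃_{n,m}‖ ≤ M e^{−β d|n−m|} for some M ≥ 1, β > 0, d > 0. If the formal identity G̃_{n,m} − G_{n,m} = Σ_{k∈ℤ} G_{n,k+1}(T̃_k − T_k) G̃_{k,m} holds, then ‖G̃_{n,m} − G_{n,m}‖ ≤ M₂ e^{−β₂ d|n−m|} sup_k ‖T̃_k − T_k‖ for all n, m ∈ ℤ, where M₂ and β₂ ≤ β depend only on M, β, d. -/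
/-!
Substituting the dichotomy bounds into the perturbation series, the `k`-th term is at most
`M² ε e^{-βd|n-k-1|} e^{-βd|k-m|}`. Since `|n-m| ≤ |n-k-1| + |k-m| + 1`, half of the decay
rate can be spent on `e^{-βd|n-m|/2}` at the cost of a factor `e^{βd/2}`; the other half,
`e^{-βd|k-m|/2}`, is summable in `k` with a sum independent of `m`.
-/

open Real

section ExpKernel

variable {b : ℝ}

lemma summable_exp_neg_mul_abs (hb : 0 < b) : Summable fun k : ℤ => exp (-b * |(k : ℝ)|) := by
  have hnat : Summable fun n : ℕ => exp (n * -b) :=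
    summable_exp_nat_mul_iff.mpr (neg_lt_zero.mpr hb)
  refine .of_nat_of_neg (hnat.congr fun n => ?_) (hnat.congr fun n => ?_) <;>
    simp [abs_of_nonneg, mul_comm]

lemma hasSum_exp_neg_mul_abs_sub (hb : 0 < b) (m : ℤ) :
    HasSum (fun k : ℤ => exp (-b * |(k : ℝ) - m|)) (∑' k : ℤ, exp (-b * |(k : ℝ)|)) := by
  have := (Equiv.subRight m).hasSum_iff.mpr (summable_exp_neg_mul_abs hb).hasSum
  simpa only [Function.comp_def, Equiv.subRight_apply, Int.cast_sub] using this

lemma exp_mul_exp_le_of_abs_sub (hb : 0 ≤ b) (n k m : ℝ) :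
    exp (-b * |n - (k + 1)|) * exp (-b * |k - m|) ≤
      exp (b / 2) * exp (-(b / 2) * |n - m|) * exp (-(b / 2) * |k - m|) := by
  have htri : |n - m| ≤ |n - (k + 1)| + |k - m| + 1 := by
    calc |n - m| = |(n - (k + 1)) + (k - m) + 1| := by ring_nf
      _ ≤ |n - (k + 1)| + |k - m| + |(1 : ℝ)| := abs_add_three _ _ _
      _ = |n - (k + 1)| + |k - m| + 1 := by rw [abs_one]
  simp only [← exp_add, exp_le_exp]
  nlinarith [mul_le_mul_of_nonneg_left htri hb, abs_nonneg (n - (k + 1)), abs_nonneg (k - m)]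

end ExpKernel

section Operators

variable {𝕜 E F G H : Type*} [NontriviallyNormedField 𝕜] [SeminormedAddCommGroup E]
  [SeminormedAddCommGroup F] [SeminormedAddCommGroup G] [SeminormedAddCommGroup H]
  [NormedSpace 𝕜 E] [NormedSpace 𝕜 F] [NormedSpace 𝕜 G] [NormedSpace 𝕜 H]

lemma norm_comp_comp_le (A : G →L[𝕜] H) (B : F →L[𝕜] G) (C : E →L[𝕜] F) :
    ‖A.comp (B.comp C)‖ ≤ ‖A‖ * (‖B‖ * ‖C‖) :=
  (A.opNorm_comp_le _).trans (by gcongr; exact B.opNorm_comp_le C)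

lemma norm_comp_comp_le_of_exp_decay {M b ε : ℝ} (hb : 0 ≤ b) {n k m : ℝ}
    {A : G →L[𝕜] H} {B : F →L[𝕜] G} {C : E →L[𝕜] F}
    (hA : ‖A‖ ≤ M * exp (-b * |n - (k + 1)|)) (hB : ‖B‖ ≤ ε)
    (hC : ‖C‖ ≤ M * exp (-b * |k - m|)) :
    ‖A.comp (B.comp C)‖ ≤
      M ^ 2 * ε * exp (b / 2) * exp (-(b / 2) * |n - m|) * exp (-(b / 2) * |k - m|) := by
  have hε : 0 ≤ ε := (norm_nonneg _).trans hB
  have hA₀ : 0 ≤ M * exp (-b * |n - (k + 1)|) := (norm_nonneg _).trans hA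
  calc _ ≤ ‖A‖ * (‖B‖ * ‖C‖) := norm_comp_comp_le A B C
    _ ≤ M * exp (-b * |n - (k + 1)|) * (ε * (M * exp (-b * |k - m|))) := by gcongr
    _ = M ^ 2 * ε * (exp (-b * |n - (k + 1)|) * exp (-b * |k - m|)) := by ring
    _ ≤ M ^ 2 * ε * (exp (b / 2) * exp (-(b / 2) * |n - m|) * exp (-(b / 2) * |k - m|)) := by
      gcongr M ^ 2 * ε * ?_
      exact exp_mul_exp_le_of_abs_sub hb n k m
    _ = _ := by ring

end Operators

/-- Perturbation of discrete dichotomy Green's functions: `M₂` and `β₂`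
depend only on `M`, `β`, `d`. -/
theorem stmt9 (M β d : ℝ) (hM : 1 ≤ M) (hβ : 0 < β) (hd : 0 < d) :
    ∃ M₂ β₂ : ℝ, 0 < M₂ ∧ 0 < β₂ ∧ β₂ ≤ β ∧
      ∀ (Y : Type) (_ : NormedAddCommGroup Y) (_ : NormedSpace ℝ Y)
        (T T' : ℤ → Y →L[ℝ] Y) (G G' : ℤ → ℤ → Y →L[ℝ] Y) (ε : ℝ),
        (∀ n m : ℤ, ‖G n m‖ ≤ M * exp (-β * d * |(n : ℝ) - m|)) →
        (∀ n m : ℤ, ‖G' n m‖ ≤ M * exp (-β * d * |(n : ℝ) - m|)) →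
        (∀ k : ℤ, ‖T' k - T k‖ ≤ ε) →
        (∀ n m : ℤ, HasSum
          (fun k : ℤ => (G n (k + 1)).comp ((T' k - T k).comp (G' k m)))
          (G' n m - G n m)) →
        ∀ n m : ℤ,
          ‖G' n m - G n m‖ ≤ M₂ * exp (-β₂ * d * |(n : ℝ) - m|) * ε := by
  set b := β * d
  have hb : 0 < b := by positivity
  set S := ∑' k : ℤ, exp (-(b / 2) * |(k : ℝ)|)
  have hS : 0 < S := (summable_exp_neg_mul_abs (half_pos hb)).tsum_pos
    (fun _ => (exp_pos _).le) 0 (exp_pos _)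
  refine ⟨M ^ 2 * exp (b / 2) * S, β / 2, by positivity, by positivity, by linarith, ?_⟩
  intro Y _ _ T T' G G' ε hG hG' hT hsum n m
  have hrate : ∀ x : ℝ, -β * d * x = -b * x := fun x => by ring
  set c := M ^ 2 * ε * exp (b / 2) * exp (-(b / 2) * |(n : ℝ) - m|)
  have hterm : ∀ k : ℤ, ‖(G n (k + 1)).comp ((T' k - T k).comp (G' k m))‖ ≤
      c * exp (-(b / 2) * |(k : ℝ) - m|) := fun k => by
    have hGn := hG n (k + 1)
    have hG'k := hG' k m
    push_cast [hrate] at hGn hG'k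
    exact norm_comp_comp_le_of_exp_decay hb.le hGn (hT k) hG'k
  calc ‖G' n m - G n m‖ ≤ c * S :=
        (hsum n m).norm_le_of_bounded ((hasSum_exp_neg_mul_abs_sub (half_pos hb) m).mul_left c)
          hterm
    _ = M ^ 2 * exp (b / 2) * S * exp (-(β / 2) * d * |(n : ℝ) - m|) * ε := by
        simp only [c, b]; ring_nf
end

section
/- Beating exclusion estimate: Suppose τ : ℝ_{≥0} → ℝ is of the form τ(r) = θ₀ + b·r with b > 0 (as a function of r = ‖u‖²_{L²}), and suppose u₁, u₂ ≥ 0 in L²(0,π) with t₁ = τ(‖u₁‖²), t₂ = τ(‖u₂‖²), t₁ < t₂, ‖u₂ − ũ‖ ≤ M₂(t₂ − t₁) and ‖u₂ + ũ‖ ≤ M₃, where ũ satisfies τ(‖ũ‖²) − τ(‖u₁‖²) ≤ b((1−a)² − 1)‖u₁‖² with 0 < a < 2. If b·M₂·M₃ < 1, then t₂ − t₁ ≤ b((1−a)² − 1)‖u₁‖²/(1 − b M₂ M₃); in particular, if (1−a)² < 1 and ‖u₁‖ > 0, this yields t₂ − t₁ < 0, a contradiction, so the solution cannot meet the surface twice.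 -/
/-! Write `δ = τ(‖u₂‖²) - τ(‖u₁‖²)` and split it through `ũ`. Since
`‖u₂‖² - ‖ũ‖² = ⟪u₂ - ũ, u₂ + ũ⟫`, Cauchy–Schwarz and the two norm bounds give
`τ(‖u₂‖²) - τ(‖ũ‖²) ≤ b M₂ M₃ δ`, so `(1 - b M₂ M₃) δ ≤ b((1 - a)² - 1)‖u₁‖²`.
When `b M₂ M₃ < 1` and `(1 - a)² < 1` the right side is negative for `u₁ ≠ 0`,
contradicting `δ > 0`. -/

section

variable {H : Type*} [NormedAddCommGroup H] [InnerProductSpace ℝ H]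

theorem real_inner_sub_add_eq_norm_sq_sub_norm_sq (x y : H) :
    inner ℝ (x - y) (x + y) = ‖x‖ ^ 2 - ‖y‖ ^ 2 := by
  rw [inner_sub_left, inner_add_right, inner_add_right, real_inner_self_eq_norm_sq,
    real_inner_self_eq_norm_sq, real_inner_comm y x]
  ring

theorem abs_norm_sq_sub_norm_sq_le (x y : H) :
    |‖x‖ ^ 2 - ‖y‖ ^ 2| ≤ ‖x - y‖ * ‖x + y‖ := by
  rw [← real_inner_sub_add_eq_norm_sq_sub_norm_sq]
  exact abs_real_inner_le_norm _ _

theorem one_sub_mul_sub_le_of_lipschitz {τ : ℝ → ℝ} {b M₂ M₃ D : ℝ} {u₁ u₂ ũ : H}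
    (hb : 0 ≤ b) (hτ : ∀ r s, τ r - τ s ≤ b * |r - s|)
    (hdiff : ‖u₂ - ũ‖ ≤ M₂ * (τ (‖u₂‖ ^ 2) - τ (‖u₁‖ ^ 2)))
    (hsum : ‖u₂ + ũ‖ ≤ M₃)
    (hũ : τ (‖ũ‖ ^ 2) - τ (‖u₁‖ ^ 2) ≤ D) :
    (1 - b * M₂ * M₃) * (τ (‖u₂‖ ^ 2) - τ (‖u₁‖ ^ 2)) ≤ D := by
  set δ := τ (‖u₂‖ ^ 2) - τ (‖u₁‖ ^ 2)
  have hu₂ũ : τ (‖u₂‖ ^ 2) - τ (‖ũ‖ ^ 2) ≤ b * M₂ * M₃ * δ :=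
    calc τ (‖u₂‖ ^ 2) - τ (‖ũ‖ ^ 2) ≤ b * |‖u₂‖ ^ 2 - ‖ũ‖ ^ 2| := hτ _ _
      _ ≤ b * (‖u₂ - ũ‖ * ‖u₂ + ũ‖) :=
        mul_le_mul_of_nonneg_left (abs_norm_sq_sub_norm_sq_le _ _) hb
      _ ≤ b * (M₂ * δ * M₃) := mul_le_mul_of_nonneg_left
        (mul_le_mul hdiff hsum (norm_nonneg _) ((norm_nonneg _).trans hdiff)) hb
      _ = b * M₂ * M₃ * δ := by ring
  linarith

end

theorem stmt13_general {H : Type*} [NormedAddCommGroup H] [InnerProductSpace ℝ H]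
    (τ : ℝ → ℝ) (θ₀ b a M₂ M₃ t₁ t₂ : ℝ) (u₁ u₂ utld : H)
    (hb : 0 < b)
    (hτ : ∀ r : ℝ, τ r = θ₀ + b * r)
    (ht₁ : t₁ = τ (‖u₁‖ ^ 2)) (ht₂ : t₂ = τ (‖u₂‖ ^ 2))
    (ht12 : t₁ < t₂)
    (hdiff : ‖u₂ - utld‖ ≤ M₂ * (t₂ - t₁))
    (hsum : ‖u₂ + utld‖ ≤ M₃)
    (htld : τ (‖utld‖ ^ 2) - τ (‖u₁‖ ^ 2) ≤ b * ((1 - a) ^ 2 - 1) * ‖u₁‖ ^ 2)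
    (hsmall : b * M₂ * M₃ < 1) :
    t₂ - t₁ ≤ b * ((1 - a) ^ 2 - 1) * ‖u₁‖ ^ 2 / (1 - b * M₂ * M₃) ∧
      ((1 - a) ^ 2 < 1 → 0 < ‖u₁‖ → False) := by
  subst ht₁ ht₂
  have hlip (r s : ℝ) : τ r - τ s ≤ b * |r - s| :=
    calc τ r - τ s = b * (r - s) := by rw [hτ, hτ]; ring
      _ ≤ b * |r - s| := mul_le_mul_of_nonneg_left (le_abs_self _) hb.le
  have hpos : 0 < 1 - b * M₂ * M₃ := sub_pos.mpr hsmall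
  have hbound := (le_div_iff₀' hpos).mpr (one_sub_mul_sub_le_of_lipschitz hb.le hlip hdiff hsum htld)
  refine ⟨hbound, fun ha hu₁ => ?_⟩
  have hneg : b * ((1 - a) ^ 2 - 1) * ‖u₁‖ ^ 2 < 0 :=
    mul_neg_of_neg_of_pos (mul_neg_of_pos_of_neg hb (by linarith)) (by positivity)
  linarith [div_neg_of_neg_of_pos hneg hpos]

theorem stmt13 {H : Type*} [NormedAddCommGroup H] [InnerProductSpace ℝ H]
    (τ : ℝ → ℝ) (θ₀ b a M₂ M₃ t₁ t₂ : ℝ) (u₁ u₂ utld : H)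
    (hb : 0 < b) (ha0 : 0 < a) (ha2 : a < 2)
    (hτ : ∀ r : ℝ, τ r = θ₀ + b * r)
    (ht₁ : t₁ = τ (‖u₁‖ ^ 2)) (ht₂ : t₂ = τ (‖u₂‖ ^ 2))
    (ht12 : t₁ < t₂)
    (hdiff : ‖u₂ - utld‖ ≤ M₂ * (t₂ - t₁))
    (hsum : ‖u₂ + utld‖ ≤ M₃)
    (htld : τ (‖utld‖ ^ 2) - τ (‖u₁‖ ^ 2) ≤ b * ((1 - a) ^ 2 - 1) * ‖u₁‖ ^ 2)
    (hsmall : b * M₂ * M₃ < 1) :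
    t₂ - t₁ ≤ b * ((1 - a) ^ 2 - 1) * ‖u₁‖ ^ 2 / (1 - b * M₂ * M₃) ∧
      ((1 - a) ^ 2 < 1 → 0 < ‖u₁‖ → False) :=
  stmt13_general τ θ₀ b a M₂ M₃ t₁ t₂ u₁ u₂ utld hb hτ ht₁ ht₂ ht12 hdiff hsum htld hsmall
end

section
/- Shift operator estimate in the fractional power scale of the Dirichlet Laplacian on (0,π): let R and L be the shift operators on L²(0,π) defined on u = Σ_{k≥1} a_k sin(kx) by Ru = Σ_{k≥1} a_k sin((k−1)x) and Lu = Σ_{k≥1} a_k sin((k+1)x), and let T = (R − L)/2. Then for all α, β ≥ 0 with α + β ≤ 1 and all t > 0: ‖A^α T A^β e^{−At}‖ ≤ ((4^α + 1)/2) ‖A^{α+β} e^{−At}‖, where A is the Dirichlet Laplacian with eigenvalues k². -/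
open Real

/- Coefficient (Fourier-sine) model on `(0,π)`: a function
`u = Σ_{k≥1} a_k sin(kx)` is represented by its coefficient sequence
`c : ℕ → ℝ` with `c j = a_{j+1}`. -/
namespace Stmt15

/-- The shift operator `R`: `Ru = Σ a_k sin((k-1)x)` (the `k = 1` term
vanishes since `sin 0 = 0`), i.e. `(Rc)_j = c_{j+1}` in coefficients. -/
def coefR (c : ℕ → ℝ) : ℕ → ℝ := fun j => c (j + 1)

/-- The shift operator `L`: `Lu = Σ a_k sin((k+1)x)`, i.e.
`(Lc)_j = c_{j-1}` with `(Lc)_0 = 0`. -/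
def coefL (c : ℕ → ℝ) : ℕ → ℝ := fun j => if j = 0 then 0 else c (j - 1)

/-- `T = (R - L)/2`. -/
noncomputable def coefT (c : ℕ → ℝ) : ℕ → ℝ := fun j => (coefR c j - coefL c j) / 2

/-- Fractional power `A^γ` of the Dirichlet Laplacian (eigenvalues `k²`). -/
noncomputable def Afrac (γ : ℝ) (c : ℕ → ℝ) : ℕ → ℝ :=
  fun j => ((j + 1 : ℝ)) ^ (2 * γ) * c j

/-- The heat semigroup `e^{-At}`. -/
noncomputable def heat (t : ℝ) (c : ℕ → ℝ) : ℕ → ℝ :=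
  fun j => exp (-((j + 1 : ℝ) ^ 2) * t) * c j

/-! In coefficients, `A^α T b = (A^α R b - A^α L b) / 2` with `b = A^β e^{-At} u`. Commuting a
shift through `A^α` costs nothing for `R`, since the weights `k^{2α}` increase, and at most
`((k+1)/k)^{2α} ≤ 4^α` for `L`. After that, `R` is a contraction and `L` an isometry of `ℓ²`,
and `A^{α+β} e^{-At}` is the multiplier bounded by its supremum `M`; so `‖A^α R b‖ ≤ M ‖u‖`,
`‖A^α L b‖ ≤ 4^α M ‖u‖`, and the triangle inequality gives the factor `(1 + 4^α) / 2`. -/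

theorem sq_sub_mul_le (s x y : ℝ) :
    s * (x - y) ^ 2 ≤ (1 + s) * (s * x ^ 2 + y ^ 2) := by
  nlinarith [sq_nonneg (s * x + y)]

theorem tsum_sub_sq_le {x y : ℕ → ℝ} {s C : ℝ} (hs : 0 < s)
    (hx : Summable fun j => x j ^ 2) (hy : Summable fun j => y j ^ 2)
    (hxC : ∑' j, x j ^ 2 ≤ C) (hyC : ∑' j, y j ^ 2 ≤ s ^ 2 * C) :
    ∑' j, (x j - y j) ^ 2 ≤ (1 + s) ^ 2 * C := by
  have hdom : ∀ j, (x j - y j) ^ 2 ≤ (1 + s) / s * (s * x j ^ 2 + y j ^ 2) := fun j => by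
    rw [div_mul_eq_mul_div, le_div_iff₀ hs, mul_comm]
    exact sq_sub_mul_le s (x j) (y j)
  have hsum : Summable fun j => (1 + s) / s * (s * x j ^ 2 + y j ^ 2) :=
    ((hx.mul_left s).add hy).mul_left _
  calc ∑' j, (x j - y j) ^ 2
      ≤ ∑' j, (1 + s) / s * (s * x j ^ 2 + y j ^ 2) :=
        (hsum.of_nonneg_of_le (fun _ => sq_nonneg _) hdom).tsum_le_tsum hdom hsum
    _ = (1 + s) / s * (s * ∑' j, x j ^ 2 + ∑' j, y j ^ 2) := by
        rw [tsum_mul_left, (hx.mul_left s).tsum_add hy, tsum_mul_left]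
    _ ≤ (1 + s) / s * (s * C + s ^ 2 * C) := by gcongr
    _ = (1 + s) ^ 2 * C := by field_simp

theorem summable_sq_of_sq_le {x y : ℕ → ℝ} {K : ℝ} (h : ∀ j, x j ^ 2 ≤ K * y j ^ 2)
    (hy : Summable fun j => y j ^ 2) : Summable fun j => x j ^ 2 :=
  (hy.mul_left K).of_nonneg_of_le (fun _ => sq_nonneg _) h

theorem tsum_sq_le_of_sq_le {x y : ℕ → ℝ} {K : ℝ} (h : ∀ j, x j ^ 2 ≤ K * y j ^ 2)
    (hy : Summable fun j => y j ^ 2) : ∑' j, x j ^ 2 ≤ K * ∑' j, y j ^ 2 := by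
  rw [← tsum_mul_left]
  exact (summable_sq_of_sq_le h hy).tsum_le_tsum h (hy.mul_left K)

theorem add_one_rpow_le_four_rpow_mul {x : ℝ} (hx : 1 ≤ x) {α : ℝ} (hα : 0 ≤ α) :
    (x + 1) ^ (2 * α) ≤ (4 : ℝ) ^ α * x ^ (2 * α) := by
  have hfour : (4 : ℝ) ^ α = (2 : ℝ) ^ (2 * α) := by
    rw [show (2 * α) = ((2 : ℕ) : ℝ) * α by norm_num, rpow_natCast_mul (by norm_num)]
    norm_num
  rw [hfour, ← mul_rpow (by norm_num) (by linarith)]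
  exact rpow_le_rpow (by linarith) (by linarith) (by positivity)

theorem Afrac_Afrac (α β : ℝ) (c : ℕ → ℝ) : Afrac α (Afrac β c) = Afrac (α + β) c := by
  ext j
  simp only [Afrac, mul_add, rpow_add (by positivity : (0 : ℝ) < j + 1), mul_assoc]

theorem Afrac_coefT (α : ℝ) (c : ℕ → ℝ) :
    Afrac α (coefT c) = fun j => (Afrac α (coefR c) j - Afrac α (coefL c) j) / 2 := by
  ext j
  simp only [Afrac, coefT]
  ring

theorem summable_sq_coefR {c : ℕ → ℝ} (hc : Summable fun j => c j ^ 2) :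
    Summable fun j => coefR c j ^ 2 :=
  (summable_nat_add_iff 1).mpr hc

theorem tsum_sq_coefR_le {c : ℕ → ℝ} (hc : Summable fun j => c j ^ 2) :
    ∑' j, coefR c j ^ 2 ≤ ∑' j, c j ^ 2 := by
  rw [hc.tsum_eq_zero_add]
  exact le_add_of_nonneg_left (sq_nonneg _)

theorem summable_sq_coefL {c : ℕ → ℝ} (hc : Summable fun j => c j ^ 2) :
    Summable fun j => coefL c j ^ 2 :=
  (summable_nat_add_iff 1).mp (by simpa [coefL] using hc)

theorem tsum_sq_coefL {c : ℕ → ℝ} (hc : Summable fun j => c j ^ 2) :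
    ∑' j, coefL c j ^ 2 = ∑' j, c j ^ 2 := by
  rw [(summable_sq_coefL hc).tsum_eq_zero_add]
  simp [coefL]

theorem sq_Afrac_coefR_le {α : ℝ} (hα : 0 ≤ α) (c : ℕ → ℝ) (j : ℕ) :
    Afrac α (coefR c) j ^ 2 ≤ coefR (Afrac α c) j ^ 2 := by
  simp only [Afrac, coefR, mul_pow]
  gcongr
  linarith

theorem sq_Afrac_coefL_le {α : ℝ} (hα : 0 ≤ α) (c : ℕ → ℝ) (j : ℕ) :
    Afrac α (coefL c) j ^ 2 ≤ ((4 : ℝ) ^ α) ^ 2 * coefL (Afrac α c) j ^ 2 := by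
  rcases j with _ | k
  · simp [Afrac, coefL]
  · simp only [Afrac, coefL, Nat.add_one_ne_zero, if_false, Nat.add_sub_cancel, mul_pow,
      ← mul_assoc, Nat.cast_add_one]
    gcongr
    rw [← mul_pow]
    gcongr
    exact add_one_rpow_le_four_rpow_mul (by linarith [k.cast_nonneg (α := ℝ)]) hα

theorem summable_sq_Afrac_coefR {α : ℝ} (hα : 0 ≤ α) {c : ℕ → ℝ}
    (hc : Summable fun j => Afrac α c j ^ 2) : Summable fun j => Afrac α (coefR c) j ^ 2 :=
  summable_sq_of_sq_le (K := 1) (by simpa using sq_Afrac_coefR_le hα c) (summable_sq_coefR hc)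

theorem tsum_sq_Afrac_coefR_le {α : ℝ} (hα : 0 ≤ α) {c : ℕ → ℝ}
    (hc : Summable fun j => Afrac α c j ^ 2) :
    ∑' j, Afrac α (coefR c) j ^ 2 ≤ ∑' j, Afrac α c j ^ 2 :=
  calc ∑' j, Afrac α (coefR c) j ^ 2
      ≤ ∑' j, coefR (Afrac α c) j ^ 2 :=
        (summable_sq_Afrac_coefR hα hc).tsum_le_tsum (sq_Afrac_coefR_le hα c)
          (summable_sq_coefR hc)
    _ ≤ ∑' j, Afrac α c j ^ 2 := tsum_sq_coefR_le hc

theorem summable_sq_Afrac_coefL {α : ℝ} (hα : 0 ≤ α) {c : ℕ → ℝ}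
    (hc : Summable fun j => Afrac α c j ^ 2) : Summable fun j => Afrac α (coefL c) j ^ 2 :=
  summable_sq_of_sq_le (sq_Afrac_coefL_le hα c) (summable_sq_coefL hc)

theorem tsum_sq_Afrac_coefL_le {α : ℝ} (hα : 0 ≤ α) {c : ℕ → ℝ}
    (hc : Summable fun j => Afrac α c j ^ 2) :
    ∑' j, Afrac α (coefL c) j ^ 2 ≤ ((4 : ℝ) ^ α) ^ 2 * ∑' j, Afrac α c j ^ 2 := by
  rw [← tsum_sq_coefL hc]
  exact tsum_sq_le_of_sq_le (sq_Afrac_coefL_le hα c) (summable_sq_coefL hc)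

open Filter in
theorem bddAbove_range_rpow_mul_exp (γ : ℝ) {t : ℝ} (ht : 0 < t) :
    BddAbove (Set.range fun j : ℕ => ((j + 1 : ℝ)) ^ (2 * γ) * exp (-((j + 1 : ℝ) ^ 2) * t)) := by
  have hsq : Tendsto (fun j : ℕ => ((j + 1 : ℝ)) ^ 2) atTop atTop :=
    (tendsto_pow_atTop two_ne_zero).comp
      (tendsto_natCast_atTop_atTop.atTop_add tendsto_const_nhds)
  refine (((tendsto_rpow_mul_exp_neg_mul_atTop_nhds_zero γ t ht).comp hsq).congr
    fun j => ?_).bddAbove_range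
  simp only [Function.comp, show (2 * γ) = ((2 : ℕ) : ℝ) * γ by norm_num,
    rpow_natCast_mul (by positivity : (0 : ℝ) ≤ j + 1)]
  ring_nf

theorem sq_Afrac_heat_le (γ : ℝ) {t : ℝ} (ht : 0 < t) (a : ℕ → ℝ) (j : ℕ) :
    Afrac γ (heat t a) j ^ 2 ≤
      (⨆ i : ℕ, ((i + 1 : ℝ)) ^ (2 * γ) * exp (-((i + 1 : ℝ) ^ 2) * t)) ^ 2 * a j ^ 2 := by
  simp only [Afrac, heat, ← mul_assoc]
  rw [mul_pow]
  gcongr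
  exact le_ciSup (bddAbove_range_rpow_mul_exp γ ht) j

/-- The operator norms are unfolded: `‖A^{α+β} e^{-At}‖ = sup_k k^{2(α+β)} e^{-k²t}`, and the
bound is stated, squared, for each `u` with coefficient sequence `a`. -/
theorem stmt15_general (α β t : ℝ) (hα : 0 ≤ α)
    (ht : 0 < t) (a : ℕ → ℝ) (hsum : Summable fun j => (a j) ^ 2) :
    ∑' j : ℕ, (Afrac α (coefT (Afrac β (heat t a))) j) ^ 2
      ≤ (((4 : ℝ) ^ α + 1) / 2) ^ 2 *
          (⨆ j : ℕ, ((j + 1 : ℝ)) ^ (2 * (α + β)) * exp (-((j + 1 : ℝ) ^ 2) * t)) ^ 2 *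
          ∑' j : ℕ, (a j) ^ 2 := by
  set M := ⨆ j : ℕ, ((j + 1 : ℝ)) ^ (2 * (α + β)) * exp (-((j + 1 : ℝ) ^ 2) * t)
  set b := Afrac β (heat t a)
  have hAb : Afrac α b = Afrac (α + β) (heat t a) := Afrac_Afrac α β _
  have hb : Summable fun j => Afrac α b j ^ 2 :=
    hAb ▸ summable_sq_of_sq_le (sq_Afrac_heat_le _ ht a) hsum
  have hb_le : ∑' j, Afrac α b j ^ 2 ≤ M ^ 2 * ∑' j, a j ^ 2 :=
    hAb ▸ tsum_sq_le_of_sq_le (sq_Afrac_heat_le _ ht a) hsum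
  have hT := tsum_sub_sq_le (s := (4 : ℝ) ^ α) (by positivity)
    (summable_sq_Afrac_coefR hα hb) (summable_sq_Afrac_coefL hα hb)
    ((tsum_sq_Afrac_coefR_le hα hb).trans hb_le)
    ((tsum_sq_Afrac_coefL_le hα hb).trans (by gcongr))
  rw [Afrac_coefT]
  simp only [div_pow, tsum_div_const]
  linarith

/-- `‖A^α T A^β e^{-At} u‖ ≤ ((4^α+1)/2) ‖A^{α+β} e^{-At}‖ ‖u‖` in the
`L²`-coefficient model, where `‖A^{α+β} e^{-At}‖ = sup_k k^{2(α+β)} e^{-k²t}`. -/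
theorem stmt15 (α β t : ℝ) (hα : 0 ≤ α) (hβ : 0 ≤ β) (hαβ : α + β ≤ 1)
    (ht : 0 < t) (a : ℕ → ℝ) (hsum : Summable fun j => (a j) ^ 2) :
    ∑' j : ℕ, (Afrac α (coefT (Afrac β (heat t a))) j) ^ 2
      ≤ (((4 : ℝ) ^ α + 1) / 2) ^ 2 *
          (⨆ j : ℕ, ((j + 1 : ℝ)) ^ (2 * (α + β)) * exp (-((j + 1 : ℝ) ^ 2) * t)) ^ 2 *
          ∑' j : ℕ, (a j) ^ 2 :=
  stmt15_general α β t hα ht a hsum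

end Stmt15
end

section
/- Exponential decay of impulsive evolution products: let b ≥ 0, θ > 0, and let (τ_j)_{j∈ℤ} be increasing with τ_{j+1} − τ_j ≥ θ, and suppose p ln(1+b) < 1 where p = lim_{T→∞} i(t, t+T)/T exists uniformly (i(s,t) counts points in (s,t)). Assume each factor satisfies ‖(I + B_j) e^{−A(τ_j − τ_{j−1})}‖ ≤ (1 + b) e^{−(τ_j − τ_{j−1})}. Then there exist ε₁ > 0 and N₁ ≥ 1 such that for all i ∈ ℤ and k ≥ 1: ∏_{j=i−k+1}^{i} ‖(I + B_j) e^{−A(τ_j − τ_{j−1})}‖ ≤ N₁ e^{−ε₁ (τ_i − τ_{i−k})} ≤ N₁ e^{−ε₁ θ k}. -/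
/-!
Each factor is at most `(1 + b) e^{-(τ_j - τ_{j-1})}`, so the product over `k` consecutive
indices is at most `exp (k log (1 + b) - (τ_i - τ_{i-k}))`. Since the open interval
`(τ_{i-k}, τ_i)` contains exactly `k - 1` impulse points, the uniform density `p` gives
`k ≤ C + (p + δ) (τ_i - τ_{i-k})` for every `δ > 0` (long intervals by the density, short
ones by the gap `θ`). With `δ (1 + log (1 + b)) = 1 - p log (1 + b)` the exponent becomes
`C log (1 + b) - δ (τ_i - τ_{i-k})`.
-/

open Real

noncomputable def impCount17 (τ : ℤ → ℝ) (s t : ℝ) : ℕ :=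
  Nat.card {k : ℤ | s < τ k ∧ τ k < t}

open Finset

lemma card_Icc_sub_add_one (i : ℤ) (k : ℕ) : #(Icc (i - k + 1) i) = k := by
  rw [Int.card_Icc, show i + 1 - (i - k + 1) = k by ring, Int.toNat_natCast]

lemma sum_Icc_sub_eq_sub (τ : ℤ → ℝ) (i : ℤ) (k : ℕ) :
    ∑ j ∈ Icc (i - k + 1) i, (τ j - τ (j - 1)) = τ i - τ (i - k) := by
  induction k with
  | zero => simp
  | succ k ih =>
    have hIcc : Icc (i - (k + 1 : ℕ) + 1) i = insert (i - k) (Icc (i - k + 1) i) := by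
      ext; simp only [mem_Icc, mem_insert]; omega
    rw [hIcc, sum_insert (by simp), ih, show i - k - 1 = i - (k + 1 : ℕ) by push_cast; ring]
    ring

lemma natCast_mul_le_sub {τ : ℤ → ℝ} {θ : ℝ} (hgap : ∀ j, θ ≤ τ (j + 1) - τ j)
    (i : ℤ) (k : ℕ) : k * θ ≤ τ i - τ (i - k) := by
  rw [← sum_Icc_sub_eq_sub]
  calc (k : ℝ) * θ = ∑ _j ∈ Icc (i - k + 1) i, θ := by
        rw [sum_const, card_Icc_sub_add_one, nsmul_eq_mul]
    _ ≤ _ := sum_le_sum fun j _ => by simpa using hgap (j - 1)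

lemma impCount17_apply_sub {τ : ℤ → ℝ} (hmono : StrictMono τ) (i : ℤ) (k : ℕ) :
    impCount17 τ (τ (i - k)) (τ i) = k - 1 := by
  have hset : {m : ℤ | τ (i - k) < τ m ∧ τ m < τ i} = ↑(Ioo (i - k) i) := by
    ext m
    simp [hmono.lt_iff_lt]
  rw [impCount17, hset, Nat.card_coe_set_eq, Set.ncard_coe_finset, Int.card_Ioo,
    show i - (i - k) - 1 = (k : ℤ) - 1 by ring]
  omega

lemma exists_natCast_le_add_mul_sub {τ : ℤ → ℝ} {θ p δ : ℝ} (hθ : 0 < θ) (hp : 0 ≤ p)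
    (hmono : StrictMono τ) (hgap : ∀ j, θ ≤ τ (j + 1) - τ j)
    (hlim : ∀ ε : ℝ, 0 < ε → ∃ T₀ : ℝ, 0 < T₀ ∧ ∀ s t : ℝ, T₀ ≤ t - s →
      |(impCount17 τ s t : ℝ) / (t - s) - p| < ε)
    (hδ : 0 < δ) :
    ∃ C : ℝ, 0 ≤ C ∧ ∀ (i : ℤ) (k : ℕ), (k : ℝ) ≤ C + (p + δ) * (τ i - τ (i - k)) := by
  obtain ⟨T₀, hT₀, hT⟩ := hlim δ hδ
  have hC : 0 ≤ T₀ / θ := by positivity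
  refine ⟨1 + T₀ / θ, by positivity, fun i k => ?_⟩
  have hkθ := natCast_mul_le_sub hgap i k
  rcases le_or_gt T₀ (τ i - τ (i - k)) with hlong | hshort
  · have hk : (k : ℝ) ≤ impCount17 τ (τ (i - k)) (τ i) + 1 := by
      rw [impCount17_apply_sub hmono]
      exact_mod_cast (by omega : k ≤ k - 1 + 1)
    have hcount : (impCount17 τ (τ (i - k)) (τ i) : ℝ) < (p + δ) * (τ i - τ (i - k)) :=
      (div_lt_iff₀ (by linarith)).1 (by linarith [(abs_lt.1 (hT _ _ hlong)).2])
    linarith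
  · have hk : (k : ℝ) ≤ T₀ / θ := by
      rw [le_div_iff₀ hθ]
      linarith
    have : 0 ≤ (p + δ) * (τ i - τ (i - k)) :=
      mul_nonneg (by linarith) (le_trans (by positivity) hkθ)
    linarith

lemma prod_Icc_le_pow_mul_exp {τ f : ℤ → ℝ} {c : ℝ} (hf0 : ∀ j, 0 ≤ f j)
    (hf : ∀ j, f j ≤ c * exp (-(τ j - τ (j - 1)))) (i : ℤ) (k : ℕ) :
    ∏ j ∈ Icc (i - k + 1) i, f j ≤ c ^ k * exp (-(τ i - τ (i - k))) :=
  calc ∏ j ∈ Icc (i - k + 1) i, f j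
      ≤ ∏ j ∈ Icc (i - k + 1) i, c * exp (-(τ j - τ (j - 1))) :=
        prod_le_prod (fun j _ => hf0 j) (fun j _ => hf j)
    _ = c ^ k * exp (-(τ i - τ (i - k))) := by
        rw [prod_mul_distrib, prod_const, card_Icc_sub_add_one, ← exp_sum, sum_neg_distrib,
          sum_Icc_sub_eq_sub]

theorem stmt17 (τ : ℤ → ℝ) (f : ℤ → ℝ) (b θ p : ℝ)
    (hb : 0 ≤ b) (hθ : 0 < θ) (hp : 0 ≤ p)
    (hmono : StrictMono τ)
    (hgap : ∀ j : ℤ, θ ≤ τ (j + 1) - τ j)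
    (hlim : ∀ ε : ℝ, 0 < ε → ∃ T₀ : ℝ, 0 < T₀ ∧ ∀ s t : ℝ, T₀ ≤ t - s →
      |(impCount17 τ s t : ℝ) / (t - s) - p| < ε)
    (hplog : p * Real.log (1 + b) < 1)
    (hf0 : ∀ j : ℤ, 0 ≤ f j)
    (hf : ∀ j : ℤ, f j ≤ (1 + b) * exp (-(τ j - τ (j - 1)))) :
    ∃ ε₁ : ℝ, 0 < ε₁ ∧ ∃ N₁ : ℝ, 1 ≤ N₁ ∧
      ∀ i : ℤ, ∀ k : ℕ, 1 ≤ k →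
        (∏ j ∈ Finset.Icc (i - k + 1) i, f j)
            ≤ N₁ * exp (-ε₁ * (τ i - τ (i - k))) ∧
          N₁ * exp (-ε₁ * (τ i - τ (i - k))) ≤ N₁ * exp (-ε₁ * θ * k) := by
  set L := log (1 + b)
  have hL : 0 ≤ L := log_nonneg (by linarith)
  set δ := (1 - p * L) / (1 + L)
  have hδ : 0 < δ := div_pos (by linarith) (by linarith)
  have hδL : δ * (1 + L) = 1 - p * L := div_mul_cancel₀ _ (by linarith)
  obtain ⟨C, hC, hk⟩ := exists_natCast_le_add_mul_sub hθ hp hmono hgap hlim hδ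
  refine ⟨δ, hδ, exp (C * L), one_le_exp (by positivity), fun i k _ => ⟨?_, ?_⟩⟩
  · calc ∏ j ∈ Icc (i - k + 1) i, f j
        ≤ (1 + b) ^ k * exp (-(τ i - τ (i - k))) := prod_Icc_le_pow_mul_exp hf0 hf i k
      _ = exp (k * L - (τ i - τ (i - k))) := by
        rw [← exp_log (by linarith : 0 < 1 + b), ← exp_nat_mul, ← exp_add]
        rfl
      _ ≤ exp (C * L + -δ * (τ i - τ (i - k))) := exp_le_exp.2 <| by
        linear_combination mul_le_mul_of_nonneg_right (hk i k) hL + (τ i - τ (i - k)) * hδL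
      _ = exp (C * L) * exp (-δ * (τ i - τ (i - k))) := exp_add _ _
  · refine mul_le_mul_of_nonneg_left (exp_le_exp.2 ?_) (exp_pos _).le
    linarith [mul_le_mul_of_nonneg_left (natCast_mul_le_sub hgap i k) hδ.le]
end
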